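/- arXiv:1210.6925 — 3 statements merged into one kernel-verified Lean document; each statement's English description precedes it below -/
import Mathlib

section
/- Let G be a 3-regular finite simple pfaffian graph on n vertices (n even). Then the number of perfect matchings of G is at most 3^{n/4}. -/
open scoped Classical
open Matrix

/-- `M` is a perfect matching of `G`: a set of edges of `G` such that every vertex
belongs to exactly one edge of `M`. -/
def IsPerfMatching {V : Type*} [Fintype V] (G : SimpleGraph V) (M : Finset (Sym2 V)) : Prop :=
  (∀ e ∈ M, e ∈ G.edgeSet) ∧ ∀ v : V, ∃! e, e ∈ M ∧ v ∈ e

/-- The number of perfect matchings of `G`. -/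
noncomputable def perfmat {V : Type*} [Fintype V] (G : SimpleGraph V) : ℕ :=
  Nat.card {M : Finset (Sym2 V) // IsPerfMatching G M}

/-- `G` is pfaffian: there is a real skew-symmetric matrix `S` indexed by the vertices,
with `S u v ∈ {1,-1}` whenever `{u,v}` is an edge and `S u v = 0` otherwise, such that
`det S = (perfmat G)²`. -/
def IsPfaffian {V : Type*} [Fintype V] (G : SimpleGraph V) : Prop :=
  ∃ S : Matrix V V ℝ, Sᵀ = -S ∧
    (∀ u v : V, G.Adj u v → S u v = 1 ∨ S u v = -1) ∧
    (∀ u v : V, ¬ G.Adj u v → S u v = 0) ∧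
    S.det = (perfmat G : ℝ) ^ 2

/-- `G` contains no 4-cycles. -/
def No4Cycles {V : Type*} (G : SimpleGraph V) : Prop :=
  ∀ a b c d : V, a ≠ b → a ≠ c → a ≠ d → b ≠ c → b ≠ d → c ≠ d →
    ¬ (G.Adj a b ∧ G.Adj b c ∧ G.Adj c d ∧ G.Adj d a)

/-! For a signed adjacency matrix `S` of `G` (the pfaffian orientation), `S Sᵀ` is positive
semidefinite and its diagonal entries are the degrees, so its trace is `3n`. AM-GM on the
eigenvalues gives `det (S Sᵀ) ≤ 3ⁿ`, and `det (S Sᵀ) = (det S)² = (perfmat G)⁴`. -/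

namespace Finset

theorem prod_le_sum_div_card_pow {ι : Type*} (s : Finset ι) (z : ι → ℝ)
    (hz : ∀ i ∈ s, 0 ≤ z i) : ∏ i ∈ s, z i ≤ ((∑ i ∈ s, z i) / #s) ^ #s := by
  rcases s.eq_empty_or_nonempty with rfl | hs
  · simp
  have hcard : (0 : ℝ) < #s := by exact_mod_cast hs.card_pos
  have amgm := Real.geom_mean_le_arith_mean s (fun _ ↦ 1) z (by simp) (by simpa) hz
  simp only [Real.rpow_one, sum_const, nsmul_eq_mul, mul_one, one_mul] at amgm
  rwa [Real.rpow_inv_le_iff_of_pos (prod_nonneg hz) (div_nonneg (sum_nonneg hz) hcard.le) hcard,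
    Real.rpow_natCast] at amgm

end Finset

theorem Matrix.PosSemidef.det_le_trace_div_card_pow {n : Type*} [Fintype n] [DecidableEq n]
    {A : Matrix n n ℝ} (hA : A.PosSemidef) :
    A.det ≤ (A.trace / Fintype.card n) ^ Fintype.card n := by
  have hdet : A.det = ∏ i, hA.isHermitian.eigenvalues i := by
    simpa using hA.isHermitian.det_eq_prod_eigenvalues
  have htrace : A.trace = ∑ i, hA.isHermitian.eigenvalues i := by
    simpa using hA.isHermitian.trace_eq_sum_eigenvalues
  rw [hdet, htrace]
  exact Finset.prod_le_sum_div_card_pow _ _ fun i _ ↦ hA.eigenvalues_nonneg i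

namespace SimpleGraph

variable {V : Type*} [Fintype V] {G : SimpleGraph V} [DecidableRel G.Adj] {S : Matrix V V ℝ}

theorem mul_transpose_self_apply_self_eq_degree
    (hadj : ∀ u v, G.Adj u v → S u v = 1 ∨ S u v = -1) (hnadj : ∀ u v, ¬G.Adj u v → S u v = 0)
    (v : V) : (S * Sᵀ) v v = G.degree v := by
  have hsq : ∀ u, S v u * S v u = if G.Adj v u then 1 else 0 := by
    intro u
    by_cases h : G.Adj v u
    · rcases hadj v u h with h1 | h1 <;> simp [h1, h]
    · simp [hnadj v u h, h]
  simp only [mul_apply, transpose_apply, hsq, Finset.sum_boole, ← card_neighborFinset_eq_degree,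
    neighborFinset_eq_filter]

theorem sq_det_le_of_isRegularOfDegree {d : ℕ}
    (hadj : ∀ u v, G.Adj u v → S u v = 1 ∨ S u v = -1) (hnadj : ∀ u v, ¬G.Adj u v → S u v = 0)
    (hreg : G.IsRegularOfDegree d) : S.det ^ 2 ≤ (d : ℝ) ^ Fintype.card V := by
  have hpsd : (S * Sᵀ).PosSemidef := by
    simpa using posSemidef_self_mul_conjTranspose S
  have htrace : (S * Sᵀ).trace = d * Fintype.card V := by
    simp [trace, mul_transpose_self_apply_self_eq_degree hadj hnadj, hreg.degree_eq, mul_comm]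
  calc S.det ^ 2 = (S * Sᵀ).det := by rw [det_mul, det_transpose, sq]
    _ ≤ ((S * Sᵀ).trace / Fintype.card V) ^ Fintype.card V := hpsd.det_le_trace_div_card_pow
    _ = (d : ℝ) ^ Fintype.card V := by
      rcases eq_or_ne (Fintype.card V) 0 with h | h
      · simp [h]
      · rw [htrace, mul_div_cancel_right₀ _ (by exact_mod_cast h)]

end SimpleGraph

theorem perfmat_cubic_pfaffian_general {V : Type*} [Fintype V] (G : SimpleGraph V)
    [DecidableRel G.Adj]
    (hreg : G.IsRegularOfDegree 3) (hG : IsPfaffian G) :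
    (perfmat G : ℝ) ≤ 3 ^ ((Fintype.card V : ℝ) / 4) := by
  obtain ⟨S, -, hadj, hnadj, hdet⟩ := hG
  have hpow : (perfmat G : ℝ) ^ 4 ≤ 3 ^ Fintype.card V := by
    have := SimpleGraph.sq_det_le_of_isRegularOfDegree hadj hnadj hreg
    rwa [hdet, ← pow_mul, Nat.cast_ofNat] at this
  rw [← pow_le_pow_iff_left₀ (Nat.cast_nonneg _) (by positivity) four_ne_zero,
    ← Real.rpow_natCast (3 ^ _) 4, ← Real.rpow_mul zero_le_three]
  simpa using hpow

/-- A 3-regular pfaffian graph on an even number `n` of vertices has at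
most `3^{n/4}` perfect matchings. -/
theorem perfmat_cubic_pfaffian {V : Type*} [Fintype V] (G : SimpleGraph V)
    [DecidableRel G.Adj] (hV : Even (Fintype.card V))
    (hreg : G.IsRegularOfDegree 3) (hG : IsPfaffian G) :
    (perfmat G : ℝ) ≤ 3 ^ ((Fintype.card V : ℝ) / 4) :=
  perfmat_cubic_pfaffian_general G hreg hG
end

section
/- Let G be a 3-regular finite simple pfaffian graph on n vertices that contains no 4-cycles and possesses a Hamiltonian cycle. If n is divisible by 4, then perfmat G ≤ 8^{n/8}; if n is even but not divisible by 4, then perfmat G ≤ 8^{(n-2)/8}·√3. -/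
/-!
Let `S` be the signed adjacency matrix witnessing that `G` is pfaffian and `M = S Sᵀ`. Then `M` is
positive semidefinite, `det M = perfmat G ^ 4`, and `M a a = deg a = 3`. If `a, c, b` are
consecutive on a Hamiltonian path, the absence of 4-cycles makes `c` the only common neighbour
of `a` and `b`, so `M a b = ±1`. Pairing the path vertices `v (4q + r)` and `v (4q + r + 2)`
(`r < 2`), plus `v (n - 2)` and `v (n - 1)` when `n ≡ 2 mod 4`, Fischer's inequality bounds
`det M` by the product of the `2 × 2` principal minors of the pairs, which are `9 - 1 = 8`
(at most `9` for the leftover pair).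
-/

open scoped Classical
open Matrix

namespace Matrix.PosSemidef

section

variable {n : Type*} [Fintype n] [DecidableEq n]

theorem det_le_one {C : Matrix n n ℝ} (hC : C.PosSemidef) (h1C : (1 - C).PosSemidef) :
    C.det ≤ 1 := by
  have heig : ∀ i, hC.1.eigenvalues i ≤ 1 := by
    intro i
    set v : n → ℝ := ⇑(hC.1.eigenvectorBasis i)
    have hvv : star v ⬝ᵥ v = 1 := by
      rw [dotProduct_comm, ← EuclideanSpace.inner_eq_star_dotProduct, real_inner_self_eq_norm_sq,
        hC.1.eigenvectorBasis.orthonormal.1 i, one_pow]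
    have hquad := h1C.dotProduct_mulVec_nonneg v
    rw [sub_mulVec, one_mulVec, dotProduct_sub, hvv] at hquad
    have := hC.1.eigenvalues_eq i
    simp only [RCLike.re_to_real] at this
    linarith
  rw [hC.1.det_eq_prod_eigenvalues]
  simpa using Finset.prod_le_one (fun i _ => hC.eigenvalues_nonneg i) (fun i _ => heig i)

theorem det_le_det_add {P Q : Matrix n n ℝ} (hP : P.PosSemidef) (hQ : Q.PosSemidef) :
    P.det ≤ (P + Q).det := by
  by_cases hP0 : P.det = 0
  · rw [hP0]; exact (hP.add hQ).det_nonneg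
  have hPQ : (P + Q).PosDef := (hP.posDef_iff_det_ne_zero.mpr hP0).add_posSemidef hQ
  obtain ⟨R, hR, hRR⟩ : ∃ R : Matrix n n ℝ, R.PosSemidef ∧ R * R = P + Q := by
    open scoped MatrixOrder in
    exact ⟨CFC.sqrt (P + Q), (CFC.sqrt_nonneg _).posSemidef,
      CFC.sqrt_mul_sqrt_self _ hPQ.posSemidef.nonneg⟩
  have hRu : IsUnit R.det := by
    rw [isUnit_iff_ne_zero]
    intro h
    exact hPQ.det_pos.ne' (by rw [← hRR, det_mul, h, zero_mul])
  -- conjugating by `R⁻¹` turns `P ≤ P + Q` into `C ≤ 1`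
  set C := R⁻¹ * P * R⁻¹ with hC
  have hRinv : R⁻¹ᴴ = R⁻¹ := hR.inv.1
  have hCpsd : C.PosSemidef := by
    simpa only [hRinv] using hP.mul_mul_conjTranspose_same R⁻¹
  have h1C : (1 - C).PosSemidef := by
    have hone : R⁻¹ * (P + Q) * R⁻¹ = 1 := by
      rw [← hRR, ← mul_assoc, nonsing_inv_mul R hRu, one_mul, mul_nonsing_inv R hRu]
    have h1 : 1 - C = R⁻¹ * Q * R⁻¹ := by
      rw [← hone, hC, mul_add, add_mul]
      abel
    simpa only [h1, hRinv] using hQ.mul_mul_conjTranspose_same R⁻¹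
  have hPC : P = R * C * R := by
    rw [hC, ← mul_assoc, ← mul_assoc, mul_nonsing_inv R hRu, one_mul, mul_assoc,
      nonsing_inv_mul R hRu, mul_one]
  calc P.det = (P + Q).det * C.det := by
        rw [← hRR, det_mul]
        conv_lhs => rw [hPC, det_mul, det_mul]
        ring
    _ ≤ (P + Q).det * 1 := by gcongr; exacts [hPQ.det_pos.le, hCpsd.det_le_one h1C]
    _ = (P + Q).det := mul_one _

end

theorem det_fromBlocks_le {m n : Type*} [Fintype m] [Fintype n] [DecidableEq m]
    [DecidableEq n] {A : Matrix m m ℝ} {B : Matrix m n ℝ} {D : Matrix n n ℝ}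
    (h : (fromBlocks A B Bᴴ D).PosSemidef) : (fromBlocks A B Bᴴ D).det ≤ A.det * D.det := by
  have hA : A.PosSemidef := h.submatrix Sum.inl
  have hD : D.PosSemidef := h.submatrix Sum.inr
  by_cases hA0 : A.det = 0
  · -- a singular principal block forces the whole matrix to be singular
    suffices (fromBlocks A B Bᴴ D).det = 0 by rw [this, hA0, zero_mul]
    by_contra hM0
    have hApd : A.PosDef := (h.posDef_iff_det_ne_zero.mpr hM0).submatrix Sum.inl_injective
    exact hApd.det_pos.ne' hA0
  have hApd : A.PosDef := hA.posDef_iff_det_ne_zero.mpr hA0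
  have : Invertible A := A.invertibleOfIsUnitDet (isUnit_iff_ne_zero.mpr hA0)
  have hSchur : (D - Bᴴ * A⁻¹ * B).PosSemidef := (PosDef.fromBlocks₁₁ B D hApd).mp h
  have hDle : (D - Bᴴ * A⁻¹ * B).det ≤ D.det := by
    simpa using hSchur.det_le_det_add (hA.inv.conjTranspose_mul_mul_same B)
  rw [det_fromBlocks₁₁, invOf_eq_nonsing_inv]
  exact mul_le_mul_of_nonneg_left hDle hA.det_nonneg

theorem det_le_prod_det_diagonalBlocks {κ : Type*} [Fintype κ] [DecidableEq κ] :
    ∀ {m : ℕ} {N : Matrix (Fin m × κ) (Fin m × κ) ℝ}, N.PosSemidef →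
      N.det ≤ ∏ k, (N.submatrix (Prod.mk k) (Prod.mk k)).det
  | 0, N, _ => by simp [det_isEmpty]
  | m + 1, N, hN => by
    let e : (Fin m × κ) ⊕ κ ≃ Fin (m + 1) × κ :=
      (Equiv.sumCongr (Equiv.refl _) (Equiv.uniqueProd κ (Fin 1)).symm).trans
        ((Equiv.sumProdDistrib (Fin m) (Fin 1) κ).symm.trans
          (Equiv.prodCongr finSumFinEquiv (Equiv.refl κ)))
    set A := N.submatrix (e ∘ Sum.inl) (e ∘ Sum.inl)
    set B := N.submatrix (e ∘ Sum.inl) (e ∘ Sum.inr)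
    set D := N.submatrix (e ∘ Sum.inr) (e ∘ Sum.inr)
    have hblocks : N.submatrix e e = fromBlocks A B Bᴴ D := by
      ext (i | i) (j | j)
      · rfl
      · rfl
      · exact (hN.1.apply _ _).symm
      · rfl
    calc N.det = (fromBlocks A B Bᴴ D).det := by rw [← hblocks, det_submatrix_equiv_self]
      _ ≤ A.det * D.det := (hblocks ▸ hN.submatrix e).det_fromBlocks_le
      _ ≤ (∏ k, (A.submatrix (Prod.mk k) (Prod.mk k)).det) * D.det := by
        gcongr
        · exact (hN.submatrix _).det_nonneg
        · exact det_le_prod_det_diagonalBlocks (hN.submatrix _)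
      _ = ∏ k, (N.submatrix (Prod.mk k) (Prod.mk k)).det := by
        rw [Fin.prod_univ_castSucc]; rfl

theorem det_le_prod_of_pairing {V : Type*} [Fintype V] [DecidableEq V] {m : ℕ}
    {M : Matrix V V ℝ} (hM : M.PosSemidef) (W : Fin m × Fin 2 ≃ V) {c : Fin m → ℝ}
    (hc : ∀ k, M (W (k, 0)) (W (k, 0)) * M (W (k, 1)) (W (k, 1)) -
      M (W (k, 0)) (W (k, 1)) ^ 2 ≤ c k) :
    M.det ≤ ∏ k, c k := by
  have hMW := hM.submatrix W
  have hblock : ∀ k, ((M.submatrix W W).submatrix (Prod.mk k) (Prod.mk k)).det ≤ c k := by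
    intro k
    rw [det_fin_two]
    simpa [sq, ← hM.1.apply (W (k, 0)) (W (k, 1))] using hc k
  calc M.det = (M.submatrix W W).det := (det_submatrix_equiv_self W M).symm
    _ ≤ _ := hMW.det_le_prod_det_diagonalBlocks
    _ ≤ _ := Finset.prod_le_prod (fun k _ => (hMW.submatrix _).det_nonneg) fun k _ => hblock k

end Matrix.PosSemidef

theorem No4Cycles.eq_of_adj {V : Type*} {G : SimpleGraph V} (h4 : No4Cycles G) {a b c w : V}
    (hab : a ≠ b) (hac : G.Adj a c) (hbc : G.Adj b c) (haw : G.Adj a w) (hbw : G.Adj b w) :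
    w = c := by
  by_contra hwc
  exact h4 a c b w hac.ne hab haw.ne hbc.ne.symm (Ne.symm hwc) hbw.ne
    ⟨hac, hbc.symm, hbw, haw.symm⟩

namespace SimpleGraph

variable {V : Type*} {G : SimpleGraph V}

def IsSignedAdjMatrix (G : SimpleGraph V) (S : Matrix V V ℝ) : Prop :=
  ∀ u v, S u v ^ 2 = if G.Adj u v then 1 else 0

namespace IsSignedAdjMatrix

variable {S : Matrix V V ℝ}

theorem eq_zero (hS : G.IsSignedAdjMatrix S) {u v : V} (h : ¬ G.Adj u v) : S u v = 0 := by
  simpa [h] using hS u v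

variable [Fintype V]

theorem mul_transpose_apply_self [DecidableRel G.Adj] (hS : G.IsSignedAdjMatrix S) (a : V) :
    (S * Sᵀ) a a = G.degree a := by
  simp only [Matrix.mul_apply, Matrix.transpose_apply, ← sq, hS a,
    ← card_neighborFinset_eq_degree, neighborFinset_eq_filter]
  rw [Finset.natCast_card_filter]
  congr!

theorem sq_mul_transpose_apply_eq_one {a b c : V} (hS : G.IsSignedAdjMatrix S)
    (hac : G.Adj a c) (hbc : G.Adj b c) (huniq : ∀ w, G.Adj a w → G.Adj b w → w = c) :
    ((S * Sᵀ) a b) ^ 2 = 1 := by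
  have hsum : (S * Sᵀ) a b = S a c * S b c := by
    simp only [Matrix.mul_apply, Matrix.transpose_apply]
    refine Fintype.sum_eq_single c fun w hw => ?_
    by_cases haw : G.Adj a w
    · rw [hS.eq_zero fun hbw => hw (huniq w haw hbw), mul_zero]
    · rw [hS.eq_zero haw, zero_mul]
  rw [hsum, mul_pow, hS, hS, if_pos hac, if_pos hbc, one_mul]

end IsSignedAdjMatrix

theorem IsHamiltonian.exists_equiv_fin [Fintype V] (hG : G.IsHamiltonian)
    (hV : Fintype.card V ≠ 1) : ∃ e : Fin (Fintype.card V) ≃ V,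
      ∀ i j : Fin (Fintype.card V), (j : ℕ) = i + 1 → G.Adj (e i) (e j) := by
  obtain ⟨a, p, hp⟩ := hG hV
  have hpath := hp.isHamiltonian_tail
  refine ⟨(finCongr hpath.length_support.symm).trans hpath.getVertEquiv, fun i j hij => ?_⟩
  simp only [Equiv.trans_apply, finCongr_apply, Walk.IsHamiltonian.getVertEquiv_apply,
    Function.comp_apply, Fin.val_cast, hij]
  exact p.tail.adj_getVert_succ (by have := hpath.length_eq; have := j.isLt; omega)

end SimpleGraph

theorem exists_pairing_add_two (m : ℕ) : ∃ P : Fin m × Fin 2 ≃ Fin (2 * m),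
    ∀ k : Fin m, (k : ℕ) < 2 * (m / 2) → (P (k, 1) : ℕ) = P (k, 0) + 2 := by
  -- pair `4q + r` with `4q + r + 2` (`r < 2`), and, if `m` is odd, `2m - 2` with `2m - 1`
  let f : Fin m × Fin 2 → Fin (2 * m) := fun ks =>
    ⟨if (ks.1 : ℕ) < 2 * (m / 2) then 4 * (ks.1 / 2) + ks.1 % 2 + 2 * ks.2 else 2 * ks.1 + ks.2,
      by have := ks.1.isLt; have := ks.2.isLt; split <;> omega⟩
  have hf : Function.Injective f := by
    rintro ⟨k, s⟩ ⟨k', s'⟩ h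
    have := k.isLt; have := k'.isLt; have := s.isLt; have := s'.isLt
    simp only [f, Fin.mk.injEq] at h
    have : (k : ℕ) = k' ∧ (s : ℕ) = s' := by split_ifs at h <;> omega
    exact Prod.ext (Fin.ext this.1) (Fin.ext this.2)
  have hbij : Function.Bijective f :=
    (Fintype.bijective_iff_injective_and_card f).mpr ⟨hf, by simp [mul_comm]⟩
  refine ⟨Equiv.ofBijective f hbij, fun k hk => ?_⟩
  simp [f, hk]

theorem Fin.prod_ite_val_lt {M : Type*} [CommMonoid M] (x y : M) (a b : ℕ) :
    ∏ k : Fin (a + b), (if (k : ℕ) < a then x else y) = x ^ a * y ^ b := by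
  rw [Fin.prod_univ_eq_prod_range (fun k => if k < a then x else y), Finset.prod_range_add,
    Finset.prod_congr rfl fun k hk => if_pos (Finset.mem_range.mp hk),
    Finset.prod_congr rfl fun k _ => if_neg (Nat.not_lt.mpr (Nat.le_add_right a k))]
  simp

theorem perfmat_pow_four_le {V : Type*} [Fintype V] (G : SimpleGraph V) [DecidableRel G.Adj]
    (hreg : G.IsRegularOfDegree 3) (hG : IsPfaffian G) (h4 : No4Cycles G)
    (hham : G.IsHamiltonian) {m : ℕ} (hm : Fintype.card V = 2 * m) :
    (perfmat G : ℝ) ^ 4 ≤ 8 ^ (2 * (m / 2)) * 9 ^ (m % 2) := by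
  obtain ⟨S, -, hS₁, hS₀, hdet⟩ := hG
  have hS : G.IsSignedAdjMatrix S := fun u v => by
    split_ifs with h
    · rcases hS₁ u v h with h' | h' <;> simp [h']
    · simp [hS₀ u v h]
  have hM : (S * Sᵀ).PosSemidef := by
    simpa [conjTranspose_eq_transpose_of_trivial] using posSemidef_self_mul_conjTranspose S
  have hMdet : (S * Sᵀ).det = (perfmat G : ℝ) ^ 4 := by
    rw [det_mul, det_transpose, hdet]; ring
  have hdiag : ∀ a, (S * Sᵀ) a a = 3 := fun a => by
    rw [hS.mul_transpose_apply_self, hreg a]; norm_num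
  obtain ⟨e, he⟩ := hham.exists_equiv_fin (by omega)
  have hdist2 : ∀ i j : Fin (Fintype.card V), (j : ℕ) = i + 2 →
      (S * Sᵀ) (e i) (e j) ^ 2 = 1 := by
    intro i j hij
    let c : Fin (Fintype.card V) := ⟨i + 1, by omega⟩
    have hic := he i c rfl
    have hcj := he c j (by simp [c, hij])
    refine hS.sq_mul_transpose_apply_eq_one hic hcj.symm fun w hiw hjw =>
      h4.eq_of_adj ?_ hic hcj.symm hiw hjw
    exact e.injective.ne (Fin.ne_of_val_ne (by omega))
  obtain ⟨P, hP⟩ := exists_pairing_add_two m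
  let W := (P.trans (finCongr hm.symm)).trans e
  calc (perfmat G : ℝ) ^ 4 = (S * Sᵀ).det := hMdet.symm
    _ ≤ ∏ k : Fin (2 * (m / 2) + m % 2), if (k : ℕ) < 2 * (m / 2) then (8 : ℝ) else 9 := by
      rw [Nat.div_add_mod]
      refine hM.det_le_prod_of_pairing W fun k => ?_
      rw [hdiag, hdiag]
      split_ifs with hk
      · simp only [W, Equiv.trans_apply, finCongr_apply]
        rw [hdist2 _ _ (by simpa using hP k hk)]
        norm_num
      · nlinarith [sq_nonneg ((S * Sᵀ) (W (k, 0)) (W (k, 1)))]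
    _ = _ := Fin.prod_ite_val_lt _ _ _ _

theorem rpow_four_mul_div_eight_pow_four {x : ℝ} (hx : 0 ≤ x) (t : ℕ) :
    (x ^ ((4 * t : ℝ) / 8)) ^ 4 = x ^ (2 * t) := by
  rw [← Real.rpow_natCast, ← Real.rpow_mul hx, ← Real.rpow_natCast]
  push_cast
  ring_nf

/-- Let `G` be a 3-regular pfaffian graph on `n` vertices with no
4-cycles and a Hamiltonian cycle.  If `4 ∣ n` then `perfmat G ≤ 8^{n/8}`; if `n` is even
but not divisible by 4 then `perfmat G ≤ 8^{(n-2)/8} √3`. -/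
theorem perfmat_cubic_hamiltonian_bound {V : Type*} [Fintype V] (G : SimpleGraph V)
    [DecidableRel G.Adj] (hreg : G.IsRegularOfDegree 3) (hG : IsPfaffian G)
    (h4 : No4Cycles G) (hham : G.IsHamiltonian) :
    (4 ∣ Fintype.card V → (perfmat G : ℝ) ≤ 8 ^ ((Fintype.card V : ℝ) / 8)) ∧
      (Even (Fintype.card V) → ¬ 4 ∣ Fintype.card V →
        (perfmat G : ℝ) ≤ 8 ^ (((Fintype.card V : ℝ) - 2) / 8) * Real.sqrt 3) := by
  constructor
  · rintro ⟨t, ht⟩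
    have key := perfmat_pow_four_le G hreg hG h4 hham (m := 2 * t) (by omega)
    rw [show 2 * t / 2 = t by omega, show 2 * t % 2 = 0 by omega, pow_zero, mul_one] at key
    have hcard : (Fintype.card V : ℝ) = 4 * t := by exact_mod_cast ht
    refine le_of_pow_le_pow_left₀ four_ne_zero (by positivity) ?_
    rwa [hcard, rpow_four_mul_div_eight_pow_four (by norm_num)]
  · rintro ⟨r, hr⟩ h4dvd
    obtain ⟨t, ht⟩ : ∃ t, Fintype.card V = 4 * t + 2 := ⟨Fintype.card V / 4, by omega⟩
    have key := perfmat_pow_four_le G hreg hG h4 hham (m := 2 * t + 1) (by omega)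
    rw [show (2 * t + 1) / 2 = t by omega, show (2 * t + 1) % 2 = 1 by omega, pow_one] at key
    have hcard : (Fintype.card V : ℝ) - 2 = 4 * t := by rw [ht]; push_cast; ring
    refine le_of_pow_le_pow_left₀ four_ne_zero (by positivity) ?_
    rwa [hcard, mul_pow, rpow_four_mul_div_eight_pow_four (by norm_num),
      show Real.sqrt 3 ^ 4 = 9 by rw [show 4 = 2 * 2 by rfl, pow_mul]; norm_num]
end

section
/- Let G be a 3-regular finite simple pfaffian graph on n vertices (n even) that has at least one perfect matching and contains no 4-cycles. Then the number of perfect matchings of G is at most 8^{n/12}·3^{n/12}. -/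
open scoped Classical
open Matrix

/-!
Take the signed adjacency matrix `S` given by pfaffianity, so that `perfmat G ^ 4 = det (Sᵀ * S)`
is the product of the eigenvalues `λᵢ ≥ 0` of `Sᵀ * S`. The entry `(Sᵀ * S) u v` is a signed count
of the common neighbours of `u` and `v`; in a cubic graph without 4-cycles this makes it `3` on the
diagonal and `0` or `±1` off it, so `∑ λᵢ = 3n`, `∑ λᵢ² = 15n`, and Gershgorin gives `λᵢ ≤ 9`.
On `[0, 9]` we have `x ≤ 3 exp ((x - 3) / 3 - (x - 3)² / 150)`, and multiplying these bounds gives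
`∏ λᵢ ≤ (3 e^(-1/25))ⁿ ≤ 24^(n/3)`.
-/

open Finset

theorem sq_one_add_half_le_exp {u : ℝ} (hu : -2 ≤ u) : (1 + u / 2) ^ 2 ≤ Real.exp u := by
  calc (1 + u / 2) ^ 2 ≤ Real.exp (u / 2) ^ 2 :=
        pow_le_pow_left₀ (by linarith) (by linarith [Real.add_one_le_exp (u / 2)]) 2
    _ = Real.exp u := by rw [← Real.exp_nat_mul]; ring_nf

theorem le_three_mul_exp {x : ℝ} (h0 : 0 ≤ x) (h9 : x ≤ 9) :
    x ≤ 3 * Real.exp ((x - 3) / 3 - (x - 3) ^ 2 / 150) := by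
  set u := (x - 3) / 3 - (x - 3) ^ 2 / 150 with hu
  calc x ≤ 3 * (1 + u / 2) ^ 2 := by
        -- the difference is `(x - 3)² ((53 - x)² - 600) / 30000`
        rw [hu]; nlinarith [mul_nonneg (sq_nonneg (x - 3)) (mul_nonneg (sub_nonneg.2 h9) h0)]
    _ ≤ 3 * Real.exp u := by
        gcongr; exact sq_one_add_half_le_exp (by rw [hu]; nlinarith)

theorem prod_le_of_sum_eq_of_le_sum_sq {ι : Type*} [Fintype ι] {x : ι → ℝ}
    (h0 : ∀ i, 0 ≤ x i) (h9 : ∀ i, x i ≤ 9) (hsum : ∑ i, x i = 3 * Fintype.card ι)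
    (hsq : 15 * Fintype.card ι ≤ ∑ i, x i ^ 2) :
    ∏ i, x i ≤ (3 * Real.exp (-1 / 25)) ^ Fintype.card ι := by
  have hexp : ∑ i, ((x i - 3) / 3 - (x i - 3) ^ 2 / 150) ≤ (-1 / 25 : ℝ) * Fintype.card ι := by
    have : ∑ i, ((x i - 3) / 3 - (x i - 3) ^ 2 / 150)
        = (56 * ∑ i, x i - ∑ i, x i ^ 2 - 159 * Fintype.card ι) / 150 := by
      simp only [sub_sq, sum_sub_distrib, ← sum_div, sum_add_distrib, sum_const, card_univ,
        nsmul_eq_mul, ← sum_mul, ← mul_sum]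
      ring
    rw [this, hsum]; linarith
  calc ∏ i, x i ≤ ∏ i, 3 * Real.exp ((x i - 3) / 3 - (x i - 3) ^ 2 / 150) :=
        prod_le_prod (fun i _ ↦ h0 i) fun i _ ↦ le_three_mul_exp (h0 i) (h9 i)
    _ = 3 ^ Fintype.card ι * Real.exp (∑ i, ((x i - 3) / 3 - (x i - 3) ^ 2 / 150)) := by
        rw [prod_mul_distrib, prod_const, Real.exp_sum, card_univ]
    _ ≤ 3 ^ Fintype.card ι * Real.exp ((-1 / 25 : ℝ) * Fintype.card ι) := by gcongr
    _ = (3 * Real.exp (-1 / 25)) ^ Fintype.card ι := by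
        rw [mul_pow, ← Real.exp_nat_mul, mul_comm (Fintype.card ι : ℝ)]

theorem three_mul_exp_pow_three_le : (3 * Real.exp (-1 / 25)) ^ 3 ≤ 24 := by
  have h := Real.quadratic_le_exp_of_nonneg (x := 3 / 25) (by norm_num)
  rw [mul_pow, ← Real.exp_nat_mul, show ((3 : ℕ) : ℝ) * (-1 / 25) = -(3 / 25) by norm_num,
    Real.exp_neg, ← div_eq_mul_inv, div_le_iff₀ (Real.exp_pos _)]
  nlinarith

theorem le_rpow_div_of_pow_le {x a : ℝ} {k m : ℕ} (hx : 0 ≤ x) (ha : 0 ≤ a) (hk : k ≠ 0)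
    (h : x ^ k ≤ a ^ m) : x ≤ a ^ ((m : ℝ) / k) := by
  rw [div_eq_mul_inv, Real.rpow_mul ha,
    Real.le_rpow_inv_iff_of_pos hx (by positivity) (by positivity)]
  exact_mod_cast h

namespace Matrix

theorem trace_transpose_mul_self {m n : Type*} [Fintype m] [Fintype n] (A : Matrix m n ℝ) :
    (Aᵀ * A).trace = ∑ i, ∑ j, A i j ^ 2 := by
  simp only [trace, diag_apply, mul_apply, transpose_apply, sq]
  exact sum_comm

variable {n : Type*} [Fintype n] [DecidableEq n]

theorem IsHermitian.trace_mul_self_eq_sum_sq_eigenvalues {𝕜 : Type*} [RCLike 𝕜]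
    {A : Matrix n n 𝕜} (hA : A.IsHermitian) :
    (A * A).trace = ∑ i, (hA.eigenvalues i : 𝕜) ^ 2 := by
  conv_lhs => rw [hA.spectral_theorem, ← map_mul, Unitary.conjStarAlgAut_apply, trace_mul_cycle,
    Unitary.coe_star_mul_self, one_mul, diagonal_mul_diagonal, trace_diagonal]
  simp [sq]

theorem IsHermitian.eigenvalues_le_of_sum_abs_le {A : Matrix n n ℝ} (hA : A.IsHermitian)
    {r : ℝ} (hr : ∀ k, ∑ j, |A k j| ≤ r) (i : n) : hA.eigenvalues i ≤ r := by
  have hμ : Module.End.HasEigenvalue A.toLin' (hA.eigenvalues i) :=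
    Module.End.hasEigenvalue_iff_mem_spectrum.mpr
      (by simpa using hA.eigenvalues_mem_spectrum_real i)
  obtain ⟨k, hk⟩ := eigenvalue_mem_ball hμ
  simp only [Metric.mem_closedBall, Real.dist_eq, Real.norm_eq_abs] at hk
  calc hA.eigenvalues i ≤ |A k k| + ∑ j ∈ univ.erase k, |A k j| := by
        linarith [le_abs_self (A k k), le_abs_self (hA.eigenvalues i - A k k)]
    _ = ∑ j, |A k j| := add_sum_erase _ (fun j ↦ |A k j|) (mem_univ k)
    _ ≤ r := hr k

end Matrix

namespace SimpleGraph

variable {V : Type*}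

structure IsSignedAdjMatrix_s12 (G : SimpleGraph V) (S : Matrix V V ℝ) : Prop where
  apply_of_adj : ∀ u v, G.Adj u v → S u v = 1 ∨ S u v = -1
  apply_of_not_adj : ∀ u v, ¬G.Adj u v → S u v = 0

variable {G : SimpleGraph V}

theorem IsSignedAdjMatrix_s12.mul_self_apply_of_adj {S : Matrix V V ℝ} (hS : G.IsSignedAdjMatrix_s12 S)
    {u v : V} (h : G.Adj u v) : S u v * S u v = 1 := by
  rcases hS.apply_of_adj u v h with h | h <;> simp [h]

variable [Fintype V] [DecidableEq V] [DecidableRel G.Adj]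

theorem card_neighborFinset_inter_le_one (h4 : No4Cycles G) {u v : V} (huv : u ≠ v) :
    #(G.neighborFinset u ∩ G.neighborFinset v) ≤ 1 := by
  by_contra! h
  obtain ⟨w, hw, w', hw', hne⟩ := one_lt_card.mp h
  simp only [mem_inter, mem_neighborFinset] at hw hw'
  exact h4 u w v w' (G.ne_of_adj hw.1) huv (G.ne_of_adj hw'.1) (G.ne_of_adj hw.2).symm hne
    (G.ne_of_adj hw'.2) ⟨hw.1, hw.2.symm, hw'.2, hw'.1.symm⟩

theorem sum_card_neighborFinset_inter (u : V) :
    ∑ v, #(G.neighborFinset u ∩ G.neighborFinset v) = ∑ w ∈ G.neighborFinset u, G.degree w := by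
  have := sum_card_bipartiteAbove_eq_sum_card_bipartiteBelow (s := univ)
    (t := G.neighborFinset u) (r := G.Adj)
  convert this using 2 with v _ w
  · rw [bipartiteAbove, ← filter_mem_eq_inter]
    simp [mem_neighborFinset]
  · rw [bipartiteBelow, ← card_neighborFinset_eq_degree, neighborFinset_eq_filter]
    simp [adj_comm]

namespace IsSignedAdjMatrix_s12

variable {S : Matrix V V ℝ} (hS : G.IsSignedAdjMatrix_s12 S)
include hS

theorem transpose_mul_self_apply (u v : V) :
    (Sᵀ * S) u v = ∑ w ∈ G.neighborFinset u ∩ G.neighborFinset v, S w u * S w v := by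
  rw [mul_apply, ← sum_subset (subset_univ _)]
  · rfl
  intro w _ hw
  simp only [mem_inter, mem_neighborFinset, not_and_or] at hw
  rcases hw with h | h
  · simp [hS.apply_of_not_adj w u fun h' ↦ h h'.symm]
  · simp [hS.apply_of_not_adj w v fun h' ↦ h h'.symm]

theorem transpose_mul_self_apply_self (u : V) : (Sᵀ * S) u u = G.degree u := by
  rw [hS.transpose_mul_self_apply, inter_self, ← card_neighborFinset_eq_degree,
    sum_congr rfl fun w hw ↦ hS.mul_self_apply_of_adj ((mem_neighborFinset _ _ _).mp hw).symm,
    sum_const, nsmul_one]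

theorem abs_transpose_mul_self_apply_le (u v : V) :
    |(Sᵀ * S) u v| ≤ #(G.neighborFinset u ∩ G.neighborFinset v) := by
  rw [hS.transpose_mul_self_apply, card_eq_sum_ones, Nat.cast_sum]
  refine (abs_sum_le_sum_abs _ _).trans (sum_le_sum fun w hw ↦ ?_)
  simp only [mem_inter, mem_neighborFinset] at hw
  have hu := hS.mul_self_apply_of_adj hw.1.symm
  have hv := hS.mul_self_apply_of_adj hw.2.symm
  rw [Nat.cast_one, ← sq_le_one_iff_abs_le_one]
  nlinarith

theorem sq_transpose_mul_self_apply {u v : V}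
    (h : #(G.neighborFinset u ∩ G.neighborFinset v) ≤ 1) :
    (Sᵀ * S) u v ^ 2 = #(G.neighborFinset u ∩ G.neighborFinset v) := by
  rcases Nat.le_one_iff_eq_zero_or_eq_one.mp h with h | h
  · simp [hS.transpose_mul_self_apply, card_eq_zero.mp h]
  · obtain ⟨w, hw⟩ := card_eq_one.mp h
    have hmem : w ∈ G.neighborFinset u ∩ G.neighborFinset v := hw ▸ mem_singleton_self w
    simp only [mem_inter, mem_neighborFinset] at hmem
    rw [hS.transpose_mul_self_apply, hw, sum_singleton, card_singleton, mul_pow, sq, sq,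
      hS.mul_self_apply_of_adj hmem.1.symm, hS.mul_self_apply_of_adj hmem.2.symm]
    norm_num

variable {d : ℕ} (hreg : G.IsRegularOfDegree d)
include hreg

theorem eigenvalues_transpose_mul_self_le (hA : (Sᵀ * S).IsHermitian) (i : V) :
    hA.eigenvalues i ≤ (d : ℝ) ^ 2 := by
  refine hA.eigenvalues_le_of_sum_abs_le (fun u ↦ ?_) i
  calc ∑ v, |(Sᵀ * S) u v| ≤ ∑ v, (#(G.neighborFinset u ∩ G.neighborFinset v) : ℝ) :=
        sum_le_sum fun v _ ↦ hS.abs_transpose_mul_self_apply_le u v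
    _ = (d : ℝ) ^ 2 := by
        rw [← Nat.cast_sum, sum_card_neighborFinset_inter, sum_congr rfl fun w _ ↦ hreg w,
          sum_const, card_neighborFinset_eq_degree, hreg u, smul_eq_mul]
        push_cast; ring

theorem trace_transpose_mul_self : (Sᵀ * S).trace = d * Fintype.card V := by
  simp [trace, hS.transpose_mul_self_apply_self, hreg _, mul_comm]

theorem sum_sq_transpose_mul_self_apply (h4 : No4Cycles G) (u : V) :
    ∑ v, (Sᵀ * S) u v ^ 2 = 2 * d ^ 2 - d := by
  have hoff : ∑ v ∈ univ.erase u, (Sᵀ * S) u v ^ 2 = d ^ 2 - d := by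
    rw [sum_congr rfl fun v hv ↦ hS.sq_transpose_mul_self_apply
      (card_neighborFinset_inter_le_one h4 (ne_of_mem_erase hv).symm)]
    rw [sum_erase_eq_sub (mem_univ u), ← Nat.cast_sum, sum_card_neighborFinset_inter,
      sum_congr rfl fun w _ ↦ hreg w, sum_const, inter_self, card_neighborFinset_eq_degree,
      hreg u, smul_eq_mul]
    push_cast; ring
  rw [← add_sum_erase _ _ (mem_univ u), hoff, hS.transpose_mul_self_apply_self, hreg u]
  ring

theorem trace_transpose_mul_self_mul_self (h4 : No4Cycles G) :
    ((Sᵀ * S) * (Sᵀ * S)).trace = (2 * d ^ 2 - d) * Fintype.card V := by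
  have hsymm : (Sᵀ * S)ᵀ = Sᵀ * S := by rw [transpose_mul, transpose_transpose]
  nth_rewrite 1 [← hsymm]
  rw [Matrix.trace_transpose_mul_self,
    sum_congr rfl fun u _ ↦ hS.sum_sq_transpose_mul_self_apply hreg h4 u, sum_const, card_univ,
    nsmul_eq_mul, mul_comm]

end IsSignedAdjMatrix_s12

end SimpleGraph

theorem perfmat_cubic_no4cycle_bound_general {V : Type*} [Fintype V] (G : SimpleGraph V)
    [DecidableRel G.Adj]
    (hreg : G.IsRegularOfDegree 3) (hG : IsPfaffian G)
    (h4 : No4Cycles G) :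
    (perfmat G : ℝ) ≤
      8 ^ ((Fintype.card V : ℝ) / 12) * 3 ^ ((Fintype.card V : ℝ) / 12) := by
  obtain ⟨S, -, hS1, hS0, hdet⟩ := hG
  have hS : G.IsSignedAdjMatrix_s12 S := ⟨hS1, hS0⟩
  have hpsd : (Sᵀ * S).PosSemidef := by
    simpa [conjTranspose_eq_transpose_of_trivial] using posSemidef_conjTranspose_mul_self S
  have hA := hpsd.isHermitian
  have hprod : (perfmat G : ℝ) ^ 4 = ∏ i, hA.eigenvalues i := by
    calc (perfmat G : ℝ) ^ 4 = (Sᵀ * S).det := by rw [det_mul, det_transpose, hdet]; ring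
      _ = ∏ i, hA.eigenvalues i := by simpa using hA.det_eq_prod_eigenvalues
  have hbound : (perfmat G : ℝ) ^ 4 ≤ (3 * Real.exp (-1 / 25)) ^ Fintype.card V := by
    refine hprod ▸ prod_le_of_sum_eq_of_le_sum_sq hpsd.eigenvalues_nonneg
      (fun i ↦ (hS.eigenvalues_transpose_mul_self_le hreg hA i).trans (by norm_num)) ?_ ?_
    · simpa [hS.trace_transpose_mul_self hreg] using hA.trace_eq_sum_eigenvalues.symm
    · have htr := hA.trace_mul_self_eq_sum_sq_eigenvalues
      simp only [hS.trace_transpose_mul_self_mul_self hreg h4, RCLike.ofReal_real_eq_id, id] at htr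
      rw [← htr]
      norm_num
  rw [← Real.mul_rpow (by norm_num) (by norm_num)]
  refine le_rpow_div_of_pow_le (k := 12) (Nat.cast_nonneg _) (by norm_num) (by norm_num) ?_
  calc (perfmat G : ℝ) ^ 12 = ((perfmat G : ℝ) ^ 4) ^ 3 := by ring
    _ ≤ ((3 * Real.exp (-1 / 25)) ^ Fintype.card V) ^ 3 := by gcongr
    _ = ((3 * Real.exp (-1 / 25)) ^ 3) ^ Fintype.card V := by
        rw [← pow_mul, ← pow_mul, mul_comm (Fintype.card V)]
    _ ≤ (8 * 3) ^ Fintype.card V := by gcongr; exact three_mul_exp_pow_three_le.trans (by norm_num)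

/-- A 3-regular pfaffian graph on an even number `n` of vertices which
has a perfect matching and contains no 4-cycles has at most `8^{n/12} 3^{n/12}` perfect
matchings. -/
theorem perfmat_cubic_no4cycle_bound {V : Type*} [Fintype V] (G : SimpleGraph V)
    [DecidableRel G.Adj] (hV : Even (Fintype.card V))
    (hreg : G.IsRegularOfDegree 3) (hG : IsPfaffian G)
    (hpm : ∃ M : Finset (Sym2 V), IsPerfMatching G M) (h4 : No4Cycles G) :
    (perfmat G : ℝ) ≤
      8 ^ ((Fintype.card V : ℝ) / 12) * 3 ^ ((Fintype.card V : ℝ) / 12) :=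
  perfmat_cubic_no4cycle_bound_general G hreg hG h4
end
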